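/- Let n ≥ 1 be an integer, Q_n = ![![0,1,0],![1,0,0],![0,0,-2n]], and F = ![![0,1,0],![1,0,0],![0,0,-1]]. Then Fᵀ·Q_n·F = Q_n; the matrix F carries the subgroup 2ℤ × 2ℤ × 4nℤ of ℤ³ into itself and induces on A = ℤ³/(2ℤ × 2ℤ × 4nℤ) ≅ ℤ/2 × ℤ/2 × ℤ/4n the automorphism (x, y, z) ↦ (y, x, −z); and this induced automorphism is neither the identity of A nor the negation automorphism a ↦ −a of A. -/

import Mathlib

open Matrix

namespace Stmt12

/-- A Gram matrix (up to sign of the rank-one summand) of the lattice `H ⊕ ⟨2n⟩`. -/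
def Q (n : ℕ) : Matrix (Fin 3) (Fin 3) ℤ := !![0, 1, 0; 1, 0, 0; 0, 0, -2 * (n : ℤ)]

/-- The subgroup `Λ = 2ℤ × 2ℤ × 4nℤ` of `ℤ³`. -/
def Λ (n : ℕ) : AddSubgroup (Fin 3 → ℤ) :=
  AddSubgroup.pi Set.univ fun i => AddSubgroup.zmultiples (![(2 : ℤ), 2, 4 * (n : ℤ)] i)

/-- The image of the Fricke involution under `R_n`. -/
def F : Matrix (Fin 3) (Fin 3) ℤ := !![0, 1, 0; 1, 0, 0; 0, 0, -1]

lemma mem_L (n : ℕ) (v : Fin 3 → ℤ) :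
    v ∈ Λ n ↔ (2 : ℤ) ∣ v 0 ∧ (2 : ℤ) ∣ v 1 ∧ (4 * (n : ℤ)) ∣ v 2 := by
  constructor
  · intro h
    exact ⟨Int.mem_zmultiples_iff.mp (h 0 (Set.mem_univ _)),
           Int.mem_zmultiples_iff.mp (h 1 (Set.mem_univ _)),
           Int.mem_zmultiples_iff.mp (h 2 (Set.mem_univ _))⟩
  · rintro ⟨h0, h1, h2⟩ i _
    fin_cases i
    · exact Int.mem_zmultiples_iff.mpr h0
    · exact Int.mem_zmultiples_iff.mpr h1
    · exact Int.mem_zmultiples_iff.mpr h2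

lemma F_mulVec (v : Fin 3 → ℤ) : F.mulVec v = ![v 1, v 0, -v 2] := by
  funext i
  fin_cases i <;>
    simp [F, Matrix.mulVec, dotProduct, Fin.sum_univ_three, Matrix.vecHead, Matrix.vecTail]

/-- The natural projection. -/
def φ (n : ℕ) : (Fin 3 → ℤ) →+ ZMod 2 × ZMod 2 × ZMod (4 * n) where
  toFun v := ((v 0 : ZMod 2), (v 1 : ZMod 2), (v 2 : ZMod (4 * n)))
  map_zero' := by simp
  map_add' a b := by simp [Prod.ext_iff]

lemma φ_surj (n : ℕ) : Function.Surjective (φ n) := by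
  rintro ⟨a, b, c⟩
  refine ⟨![(ZMod.cast a : ℤ), (ZMod.cast b : ℤ), (ZMod.cast c : ℤ)], ?_⟩
  simp [φ, Prod.ext_iff, ZMod.intCast_zmod_cast]

lemma ker_φ (n : ℕ) : (φ n).ker = Λ n := by
  ext v
  rw [AddMonoidHom.mem_ker, mem_L]
  show ((v 0 : ZMod 2), (v 1 : ZMod 2), (v 2 : ZMod (4 * n))) = 0 ↔ _
  rw [Prod.ext_iff, Prod.ext_iff]
  simp only [Prod.fst_zero, Prod.snd_zero, ZMod.intCast_zmod_eq_zero_iff_dvd]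
  push_cast
  tauto

lemma F_hom_maps (n : ℕ) : ∀ v ∈ Λ n, (F.mulVecLin).toAddMonoidHom v ∈ Λ n := by
  intro v hv
  rw [mem_L] at hv ⊢
  show (2:ℤ) ∣ F.mulVec v 0 ∧ (2:ℤ) ∣ F.mulVec v 1 ∧ (4*(n:ℤ)) ∣ F.mulVec v 2
  rw [F_mulVec]
  exact ⟨hv.2.1, hv.1, by simpa using hv.2.2.neg_right⟩

theorem statement12 (n : ℕ) (hn : 1 ≤ n) :
    -- `F` is an isometry of `Q n`
    Fᵀ * Q n * F = Q n ∧
    -- `F` carries `Λ` into itself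
    (∀ v ∈ Λ n, F.mulVec v ∈ Λ n) ∧
    -- the quotient `A = ℤ³/Λ` is isomorphic to `ℤ/2 × ℤ/2 × ℤ/4n`
    Nonempty (((Fin 3 → ℤ) ⧸ Λ n) ≃+ ZMod 2 × ZMod 2 × ZMod (4 * n)) ∧
    -- `F` induces on `A` the automorphism `(x, y, z) ↦ (y, x, −z)`,
    -- which is neither the identity nor the negation automorphism
    ∃ h : AddAut ((Fin 3 → ℤ) ⧸ Λ n),
      (∀ v : Fin 3 → ℤ,
          h (QuotientAddGroup.mk v) = QuotientAddGroup.mk (F.mulVec v)) ∧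
      (∀ x y z : ℤ,
          h (QuotientAddGroup.mk ![x, y, z]) = QuotientAddGroup.mk ![y, x, -z]) ∧
      (¬ ∀ a, h a = a) ∧ (¬ ∀ a, h a = -a) := by
  refine ⟨?_, ?_, ?_, ?_⟩
  · ext i j
    fin_cases i <;> fin_cases j <;>
      simp [F, Q, Matrix.mul_apply, Fin.sum_univ_three, Matrix.vecHead, Matrix.vecTail] <;>
      ring
  · exact F_hom_maps n
  · exact ⟨(QuotientAddGroup.quotientAddEquivOfEq (ker_φ n).symm).trans
      (QuotientAddGroup.quotientKerEquivOfSurjective (φ n) (φ_surj n))⟩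
  · set g : ((Fin 3 → ℤ) ⧸ Λ n) →+ ((Fin 3 → ℤ) ⧸ Λ n) :=
      QuotientAddGroup.map (Λ n) (Λ n) F.mulVecLin.toAddMonoidHom (F_hom_maps n) with hg
    have hgmk : ∀ v : Fin 3 → ℤ,
        g (QuotientAddGroup.mk v) = QuotientAddGroup.mk (F.mulVec v) := fun v => rfl
    have hinvol : ∀ v : Fin 3 → ℤ, F.mulVec (F.mulVec v) = v := by
      intro v
      rw [F_mulVec, F_mulVec]
      funext i
      fin_cases i <;> simp
    have hgg : ∀ a, g (g a) = a := by
      intro a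
      induction a using QuotientAddGroup.induction_on with
      | H v => rw [hgmk, hgmk, hinvol]
    set e : AddAut ((Fin 3 → ℤ) ⧸ Λ n) := ⟨⟨g, g, hgg, hgg⟩, g.map_add⟩ with he
    have hemk : ∀ v : Fin 3 → ℤ,
        e (QuotientAddGroup.mk v) = QuotientAddGroup.mk (F.mulVec v) := hgmk
    refine ⟨e, hemk, ?_, ?_, ?_⟩
    · intro x y z
      rw [hemk, F_mulVec]
      norm_num
      rfl
    · intro hid
      have := hid (QuotientAddGroup.mk ![1, 0, 0])
      rw [hemk, F_mulVec] at this
      rw [QuotientAddGroup.eq, mem_L] at this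
      exact absurd (show (2:ℤ) ∣ -1 by simpa using this.1) (by decide)
    · intro hneg
      have := hneg (QuotientAddGroup.mk ![1, 0, 0])
      rw [hemk, F_mulVec] at this
      rw [show -(QuotientAddGroup.mk ![1,0,0] : (Fin 3 → ℤ) ⧸ Λ n)
          = QuotientAddGroup.mk (-![1,0,0]) from rfl] at this
      rw [QuotientAddGroup.eq, mem_L] at this
      exact absurd (show (2:ℤ) ∣ -1 by simpa using this.1) (by decide)

end Stmt12
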